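/- Let Λ be an artin algebra and z a class of finite length Λ-modules such that add(z) is closed under extensions and every module in z has projective dimension at most 1. Then g(z), the class of all Λ-modules generated by z, is closed under extensions. -/

import Mathlib

universe u v

/-- `g(z)`: the class of modules generated by `z`, i.e. epimorphic images of
(possibly infinite) direct sums of modules in `z`. -/
def genBy {Λ : Type u} [Ring Λ] (z : Set (ModuleCat.{v} Λ)) : Set (ModuleCat.{v} Λ) :=
  {M | ∃ (ι : Type v) (N : ι → ModuleCat.{v} Λ), (∀ i, N i ∈ z) ∧
    ∃ f : (DirectSum ι fun i => ↥(N i)) →ₗ[Λ] M, Function.Surjective f}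

/-- `add(z)`: the modules which are direct summands of finite direct sums of modules
in `z`. -/
def addCl {Λ : Type u} [Ring Λ] (z : Set (ModuleCat.{v} Λ)) : Set (ModuleCat.{v} Λ) :=
  {M | ∃ (n : ℕ) (N : Fin n → ModuleCat.{v} Λ), (∀ i, N i ∈ z) ∧
    ∃ (s : M →ₗ[Λ] ∀ i, ↥(N i)) (p : (∀ i, ↥(N i)) →ₗ[Λ] M), p.comp s = LinearMap.id}

/-- A class of modules is closed under extensions. -/
def ClosedUnderExt {Λ : Type u} [Ring Λ] (X : Set (ModuleCat.{v} Λ)) : Prop :=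
  ∀ (Y : ModuleCat.{v} Λ) (U : Submodule Λ Y),
    ModuleCat.of Λ U ∈ X → ModuleCat.of Λ (↥Y ⧸ U) ∈ X → Y ∈ X

/-- A module has projective dimension at most 1 if it is the quotient of a projective
module by a projective submodule (i.e. the first syzygy is projective). -/
def ProjDimLE1 {Λ : Type u} [Ring Λ] (M : ModuleCat.{v} Λ) : Prop :=
  ∃ (P : ModuleCat.{v} Λ), Module.Projective Λ ↥P ∧
    ∃ f : P →ₗ[Λ] M, Function.Surjective f ∧ Module.Projective Λ ↥(LinearMap.ker f)

/-!
Let `U ⊆ Y` with `U` and `Y/U` generated by `z`. It suffices to show that every map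
`q : Z → Y/U` with `Z ∈ z` factors, up to a surjection `X ↠ Z` with `X ∈ add z`, through `Y`:
these `X`, together with the generators of `U`, then generate `Y`.

Take `0 → K → P → Z → 0` with `P`, `K` projective. Lift `q` to `φ : P → Y`; then `φ` maps `K`
into `U`, and lifts on `K` to `ψ : K → ⨁ W` along the cover `⨁ W ↠ U`. The pushout of `P` along
`ψ` is an extension of `Z` by `⨁ W` mapping to `Y` over `q`. Since `Z` is finitely generated and
`Λ` is noetherian, `P` may be shrunk to a finitely generated submodule, whose relations are then
finitely generated and are sent by `ψ` into a finite subsum of `⨁ W`. The resulting pushout is an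
extension of `Z` by a module of `add z`, so it lies in `add z`.
-/

open DirectSum

namespace DirectSum

variable {R : Type*} [Ring R] {ι : Type*} [DecidableEq ι] {M : ι → Type*}
  [∀ i, AddCommGroup (M i)] [∀ i, Module R (M i)] {N : Type*} [AddCommGroup N] [Module R N]

theorem range_eq_iSup_range_comp_lof (f : (⨁ i, M i) →ₗ[R] N) :
    LinearMap.range f = ⨆ i, LinearMap.range (f ∘ₗ lof R ι M i) := by
  simp_rw [LinearMap.range_comp, ← Submodule.map_iSup]
  rw [LinearMap.range_eq_map]
  congr
  exact DFinsupp.iSup_range_lsingle.symm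

theorem exists_finset_comp_eq_of_fg_range (f : N →ₗ[R] ⨁ i, M i) (hf : (LinearMap.range f).FG) :
    ∃ (S : Finset ι) (g : N →ₗ[R] ⨁ i : S, M i),
      toModule R S _ (fun i => lof R ι M i) ∘ₗ g = f := by
  obtain ⟨S, hS⟩ := CompleteLattice.IsCompactElement.exists_finset_of_le_iSup _
    ((Submodule.fg_iff_compact _).mp hf) (fun i => LinearMap.range (lof R ι M i))
    (le_top.trans (DFinsupp.iSup_range_lsingle (R := R) (M := M)).ge)
  set e := toModule R S _ (fun i => lof R ι M i)
  let π := DFinsupp.subtypeDomainLinearMap R M (· ∈ S)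
  have hπ : π ∘ₗ e = LinearMap.id := by
    ext i x j
    simp only [e, π, LinearMap.coe_comp, Function.comp_apply, toModule_lof,
      DFinsupp.subtypeDomainLinearMap_apply, DFinsupp.subtypeDomain_apply, LinearMap.id_comp]
    rcases eq_or_ne i j with rfl | h
    · rw [lof_eq_of, lof_eq_of, of_eq_same, of_eq_same]
    · rw [lof_eq_of, lof_eq_of, of_eq_of_ne _ _ _ h.symm,
        of_eq_of_ne _ _ _ (Subtype.coe_ne_coe.mpr h.symm)]
  have he : ⨆ i ∈ S, LinearMap.range (lof R ι M i) = LinearMap.range e := by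
    rw [range_eq_iSup_range_comp_lof, iSup_subtype']
    congr! 2 with i
    ext x
    simp [e]
  refine ⟨S, π ∘ₗ f, LinearMap.ext fun x => ?_⟩
  obtain ⟨y, hy⟩ := (hS.trans he.le) ⟨x, rfl⟩
  simp only [LinearMap.comp_apply, ← hy]
  rw [← LinearMap.comp_apply π, hπ, LinearMap.id_apply]

end DirectSum

section addCl

variable {Λ : Type u} [Ring Λ] {z : Set (ModuleCat.{v} Λ)}

theorem addCl_of_linearEquiv {M M' : ModuleCat.{v} Λ} (e : M ≃ₗ[Λ] M') (h : M' ∈ addCl z) :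
    M ∈ addCl z := by
  obtain ⟨n, N, hN, s, p, hps⟩ := h
  refine ⟨n, N, hN, s ∘ₗ e.toLinearMap, e.symm.toLinearMap ∘ₗ p, ?_⟩
  exact LinearMap.ext fun x => by simpa using congrArg e.symm (LinearMap.congr_fun hps (e x))

theorem mem_addCl_of_mem {M : ModuleCat.{v} Λ} (h : M ∈ z) : M ∈ addCl z :=
  ⟨1, fun _ => M, fun _ => h, LinearMap.pi fun _ => LinearMap.id, LinearMap.proj 0, rfl⟩

theorem pi_mem_addCl {ι : Type v} [Fintype ι] (N : ι → ModuleCat.{v} Λ) (hN : ∀ i, N i ∈ z) :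
    ModuleCat.of Λ (∀ i, N i) ∈ addCl z := by
  let e := Fintype.equivFin ι
  refine addCl_of_linearEquiv (M' := ModuleCat.of Λ (∀ k, N (e.symm k)))
    (LinearEquiv.piCongrLeft Λ (fun i => N i) e.symm).symm ?_
  exact ⟨_, fun k => N (e.symm k), fun k => hN _, LinearMap.id, LinearMap.id, rfl⟩

theorem directSum_mem_addCl {ι : Type v} [Fintype ι] [DecidableEq ι] (N : ι → ModuleCat.{v} Λ)
    (hN : ∀ i, N i ∈ z) : ModuleCat.of Λ (⨁ i, N i) ∈ addCl z :=
  addCl_of_linearEquiv (M' := ModuleCat.of Λ (∀ i, N i))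
    (DirectSum.linearEquivFunOnFintype Λ ι fun i => N i) (pi_mem_addCl N hN)

theorem mem_addCl_of_exact (hext : ClosedUnderExt (addCl z)) {N X Z : Type v}
    [AddCommGroup N] [Module Λ N] [AddCommGroup X] [Module Λ X] [AddCommGroup Z] [Module Λ Z]
    {i : N →ₗ[Λ] X} {p : X →ₗ[Λ] Z} (hi : Function.Injective i) (hp : Function.Surjective p)
    (hip : Function.Exact i p) (hN : ModuleCat.of Λ N ∈ addCl z)
    (hZ : ModuleCat.of Λ Z ∈ addCl z) : ModuleCat.of Λ X ∈ addCl z :=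
  hext _ (LinearMap.range i)
    (addCl_of_linearEquiv (M' := ModuleCat.of Λ N) (LinearEquiv.ofInjective i hi).symm hN)
    (addCl_of_linearEquiv (M' := ModuleCat.of Λ Z) (hip.linearEquivOfSurjective hp) hZ)

end addCl

section genBy

variable {Λ : Type u} [Ring Λ] {z : Set (ModuleCat.{v} Λ)}

theorem mem_genBy_iff {M : ModuleCat.{v} Λ} :
    M ∈ genBy z ↔ ∃ (ι : Type v) (N : ι → ModuleCat.{v} Λ) (_ : ∀ i, N i ∈ z)
      (g : ∀ i, N i →ₗ[Λ] M), ⨆ i, LinearMap.range (g i) = ⊤ := by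
  classical
  constructor
  · rintro ⟨ι, N, hN, f, hf⟩
    refine ⟨ι, N, hN, fun i => f ∘ₗ lof Λ ι (fun i => N i) i, ?_⟩
    rw [← range_eq_iSup_range_comp_lof, LinearMap.range_eq_top.mpr hf]
  · rintro ⟨ι, N, hN, g, hg⟩
    refine ⟨ι, N, hN, toModule Λ ι M g, LinearMap.range_eq_top.mp ?_⟩
    rw [range_eq_iSup_range_comp_lof, ← hg]
    congr! 3 with i
    ext x
    simp

theorem genBy_of_surjective {M N : ModuleCat.{v} Λ} (hM : M ∈ genBy z) (f : M →ₗ[Λ] N)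
    (hf : Function.Surjective f) : N ∈ genBy z := by
  obtain ⟨ι, K, hK, g, hg⟩ := hM
  exact ⟨ι, K, hK, f ∘ₗ g, hf.comp hg⟩

theorem mem_genBy_of_iSup_eq_top {M : ModuleCat.{v} Λ} {ι : Type v} (A : ι → Submodule Λ M)
    (hA : ∀ i, ModuleCat.of Λ (A i) ∈ genBy z) (hAtop : ⨆ i, A i = ⊤) : M ∈ genBy z := by
  choose κ N hN g hg using fun i => mem_genBy_iff.mp (hA i)
  refine mem_genBy_iff.mpr ⟨Σ i, κ i, fun a => N a.1 a.2, fun a => hN a.1 a.2,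
    fun a => (A a.1).subtype ∘ₗ g a.1 a.2, ?_⟩
  rw [iSup_sigma, ← hAtop]
  congr! 1 with i
  simp_rw [LinearMap.range_comp, ← Submodule.map_iSup, hg, Submodule.map_subtype_top]

theorem addCl_subset_genBy : addCl z ⊆ genBy z := by
  rintro M ⟨n, N, hN, s, p, hps⟩
  refine mem_genBy_iff.mpr ⟨ULift (Fin n), fun t => N t.down, fun t => hN t.down,
    fun t => p ∘ₗ LinearMap.single Λ (fun t => N t) t.down, ?_⟩
  have hp : LinearMap.range p = ⊤ :=
    LinearMap.range_eq_top.mpr fun x => ⟨s x, LinearMap.congr_fun hps x⟩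
  rw [iSup_ulift]
  simp_rw [LinearMap.range_comp, ← Submodule.map_iSup, LinearMap.iSup_range_single,
    ← LinearMap.range_eq_map, hp]

end genBy

section KerPushout

variable {R : Type*} [Ring R] {F Z N Y : Type*} [AddCommGroup F] [Module R F]
  [AddCommGroup Z] [Module R Z] [AddCommGroup N] [Module R N] [AddCommGroup Y] [Module R Y]
  (σ : F →ₗ[R] Z) (ψ : LinearMap.ker σ →ₗ[R] N)

/-- The pushout of the inclusion `ker σ → F` along `ψ`. -/
abbrev KerPushout : Type _ := (F × N) ⧸ LinearMap.range ((LinearMap.ker σ).subtype.prod (-ψ))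

namespace KerPushout

def inr : N →ₗ[R] KerPushout σ ψ := Submodule.mkQ _ ∘ₗ LinearMap.inr R F N

def proj : KerPushout σ ψ →ₗ[R] Z :=
  Submodule.liftQ _ (σ ∘ₗ LinearMap.fst R F N) (by rintro _ ⟨x, rfl⟩; exact x.2)

def desc (φ : F →ₗ[R] Y) (ρ : N →ₗ[R] Y) (h : ρ ∘ₗ ψ = φ ∘ₗ (LinearMap.ker σ).subtype) :
    KerPushout σ ψ →ₗ[R] Y :=
  Submodule.liftQ _ (φ.coprod ρ) (by
    rintro _ ⟨x, rfl⟩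
    simpa [← sub_eq_add_neg, sub_eq_zero] using (LinearMap.congr_fun h x).symm)

@[simp] theorem proj_mk (x : F × N) : proj σ ψ (Submodule.Quotient.mk x) = σ x.1 := rfl

@[simp] theorem desc_mk (φ : F →ₗ[R] Y) (ρ : N →ₗ[R] Y) (h) (x : F × N) :
    desc σ ψ φ ρ h (Submodule.Quotient.mk x) = φ x.1 + ρ x.2 := rfl

theorem inr_injective : Function.Injective (inr σ ψ) := by
  rw [← LinearMap.ker_eq_bot, LinearMap.ker_eq_bot']
  rintro n hn
  obtain ⟨x, hx⟩ := (Submodule.Quotient.mk_eq_zero _).mp hn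
  obtain rfl : x = 0 := Subtype.ext (congrArg Prod.fst hx)
  simpa using (congrArg Prod.snd hx).symm

theorem proj_surjective (hσ : Function.Surjective σ) : Function.Surjective (proj σ ψ) :=
  fun z => let ⟨x, hx⟩ := hσ z; ⟨Submodule.Quotient.mk (x, 0), hx⟩

theorem exact_inr_proj : Function.Exact (inr σ ψ) (proj σ ψ) := by
  intro y
  obtain ⟨⟨f, n⟩, rfl⟩ := Submodule.Quotient.mk_surjective _ y
  refine ⟨fun hf => ⟨n + ψ ⟨f, hf⟩, ?_⟩, ?_⟩
  · rw [inr, LinearMap.comp_apply, Submodule.mkQ_apply, Submodule.Quotient.eq]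
    exact ⟨-⟨f, hf⟩, by simp⟩
  · rintro ⟨n', hn'⟩
    rw [← hn']
    exact map_zero σ

end KerPushout

end KerPushout

theorem exists_lift_of_projective {R : Type*} [Ring R] {P Z Y M : Type*} [AddCommGroup P]
    [Module R P] [AddCommGroup Z] [Module R Z] [AddCommGroup Y] [Module R Y] [AddCommGroup M]
    [Module R M] [Module.Projective R P] (p : P →ₗ[R] Z) [Module.Projective R (LinearMap.ker p)]
    (U : Submodule R Y) (q : Z →ₗ[R] Y ⧸ U) (r : M →ₗ[R] U) (hr : Function.Surjective r) :
    ∃ (φ : P →ₗ[R] Y) (ψ : LinearMap.ker p →ₗ[R] M),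
      U.mkQ ∘ₗ φ = q ∘ₗ p ∧ U.subtype ∘ₗ r ∘ₗ ψ = φ ∘ₗ (LinearMap.ker p).subtype := by
  obtain ⟨φ, hφ⟩ := Module.projective_lifting_property U.mkQ (q ∘ₗ p) U.mkQ_surjective
  have hφU : ∀ x : LinearMap.ker p, φ x ∈ U := fun x => by
    simpa [← Submodule.Quotient.mk_eq_zero] using LinearMap.congr_fun hφ x
  obtain ⟨ψ, hψ⟩ := Module.projective_lifting_property r
    ((φ ∘ₗ (LinearMap.ker p).subtype).codRestrict U hφU) hr
  exact ⟨φ, ψ, hφ, by rw [hψ]; rfl⟩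

theorem Submodule.exists_fg_map_eq_top {R P Z : Type*} [Ring R] [AddCommGroup P] [Module R P]
    [AddCommGroup Z] [Module R Z] [Module.Finite R Z] {p : P →ₗ[R] Z}
    (hp : Function.Surjective p) : ∃ F : Submodule R P, F.FG ∧ F.map p = ⊤ := by
  obtain ⟨s, hs⟩ := Module.Finite.fg_top (R := R) (M := Z)
  choose g hg using hp
  refine ⟨Submodule.span R (g '' s), Submodule.fg_span (s.finite_toSet.image g), ?_⟩
  simp only [Submodule.map_span, Set.image_image, hg, Set.image_id', hs]

theorem exists_addCl_lift {Λ : Type u} [Ring Λ] [IsNoetherianRing Λ] {z : Set (ModuleCat.{v} Λ)}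
    (hext : ClosedUnderExt (addCl z)) {Y : ModuleCat.{v} Λ} (U : Submodule Λ Y)
    (hU : ModuleCat.of Λ U ∈ genBy z) {Z : ModuleCat.{v} Λ} (hZ : Z ∈ z) [Module.Finite Λ Z]
    (hZpd : ProjDimLE1 Z) (q : Z →ₗ[Λ] Y ⧸ U) :
    ∃ X ∈ addCl z, ∃ (α : X →ₗ[Λ] Y) (β : X →ₗ[Λ] Z),
      Function.Surjective β ∧ U.mkQ ∘ₗ α = q ∘ₗ β := by
  classical
  obtain ⟨J, W, hW, r, hr⟩ := hU
  obtain ⟨P, hP, p, hp, hK⟩ := hZpd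
  obtain ⟨φ, ψ, hφ, hψ⟩ := exists_lift_of_projective p U q r hr
  obtain ⟨F, hFfg, hFp⟩ := Submodule.exists_fg_map_eq_top hp
  have : IsNoetherian Λ F := isNoetherian_of_fg_of_noetherian F hFfg
  let σ : F →ₗ[Λ] Z := p ∘ₗ F.subtype
  have hσ : Function.Surjective σ := by
    rw [← LinearMap.range_eq_top, LinearMap.range_comp, Submodule.range_subtype, hFp]
  let ι : LinearMap.ker σ →ₗ[Λ] LinearMap.ker p :=
    (F.subtype ∘ₗ (LinearMap.ker σ).subtype).codRestrict _ fun x => x.2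
  obtain ⟨S, ψS, hψS⟩ := DirectSum.exists_finset_comp_eq_of_fg_range (ψ ∘ₗ ι)
    (by rw [LinearMap.range_eq_map]; exact (IsNoetherian.noetherian ⊤).map _)
  let e := toModule Λ S _ fun j => lof Λ J (fun j => W j) j
  have hσψ : (U.subtype ∘ₗ r ∘ₗ e) ∘ₗ ψS = (φ ∘ₗ F.subtype) ∘ₗ (LinearMap.ker σ).subtype := by
    ext x
    have h := LinearMap.congr_fun hψS x
    simp only [LinearMap.comp_apply] at h ⊢
    rw [h]
    exact LinearMap.congr_fun hψ (ι x)
  refine ⟨ModuleCat.of Λ (KerPushout σ ψS), ?_,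
    KerPushout.desc σ ψS (φ ∘ₗ F.subtype) (U.subtype ∘ₗ r ∘ₗ e) hσψ, KerPushout.proj σ ψS,
    KerPushout.proj_surjective σ ψS hσ, ?_⟩
  · exact mem_addCl_of_exact hext (KerPushout.inr_injective σ ψS)
      (KerPushout.proj_surjective σ ψS hσ) (KerPushout.exact_inr_proj σ ψS)
      (directSum_mem_addCl (fun j : S => W j) fun j => hW j) (mem_addCl_of_mem hZ)
  · refine Submodule.linearMap_qext _ (LinearMap.prod_ext ?_ ?_) <;> ext x
    · simpa [σ] using LinearMap.congr_fun hφ x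
    · simp

/-- Lemma 4 (second case): Let `Λ` be an artin algebra (a finite dimensional algebra
over a field) and `z` a class of finite length `Λ`-modules such that `add z` is closed
under extensions and every module in `z` has projective dimension at most 1. Then
`g(z)` is closed under extensions. -/
theorem stmt_8 {k : Type u} [Field k] {Λ : Type u} [Ring Λ] [Algebra k Λ]
    [FiniteDimensional k Λ] (z : Set (ModuleCat.{v} Λ))
    (hfl : ∀ Z ∈ z, IsFiniteLength Λ ↥Z)
    (hext : ClosedUnderExt (addCl z))
    (hpd : ∀ Z ∈ z, ProjDimLE1 Z) :
    ClosedUnderExt (genBy z) := by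
  classical
  have : IsNoetherianRing Λ := isNoetherian_of_tower k inferInstance
  intro Y U hU ⟨I, Z, hZ, q, hq⟩
  have (i : I) : Module.Finite Λ (Z i) :=
    have := (isFiniteLength_iff_isNoetherian_isArtinian.mp (hfl _ (hZ i))).1
    inferInstance
  choose X hX α β hβ hαβ using fun i =>
    exists_addCl_lift hext U hU (hZ i) (hpd _ (hZ i)) (q ∘ₗ lof Λ I (fun i => Z i) i)
  refine mem_genBy_of_iSup_eq_top
    (fun o : Option I => o.elim U fun i => LinearMap.range (α i)) ?_ ?_
  · rintro (_ | i)
    · exact hU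
    · exact genBy_of_surjective (addCl_subset_genBy (hX i)) _ (α i).surjective_rangeRestrict
  have hquot : ⨆ i, (LinearMap.range (α i)).map U.mkQ = ⊤ := by
    simp_rw [← LinearMap.range_comp, hαβ, LinearMap.range_comp,
      LinearMap.range_eq_top.mpr (hβ _), ← LinearMap.range_eq_map,
      ← range_eq_iSup_range_comp_lof]
    exact LinearMap.range_eq_top.mpr hq
  rw [iSup_option_elim, ← Submodule.comap_map_mkQ, Submodule.map_iSup, hquot, Submodule.comap_top]
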